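/- arXiv:1707.06309 — 5 statements merged into one kernel-verified Lean document; each statement's English description precedes it below -/
import Mathlib

section
/- The univariate complex Hermite polynomials satisfy the exponential generating function ∑_{m,n=0}^∞ (u^m v^n)/(m! n!) H_{m,n}^ν(z, z̄) = exp(ν(u z + v z̄ - u v)) for all complex u, v, z and ν > 0, with the double series converging absolutely. -/
noncomputable def complexHermite (ν : ℝ) (m n : ℕ) (z w : ℂ) : ℂ :=
  (-1)^(m+n) * Complex.exp ((ν : ℂ) * z * w) *
    iteratedDeriv m (fun w' => iteratedDeriv n (fun z' => Complex.exp (-(ν : ℂ) * z' * w')) z) w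

/-!
Differentiating `exp (-ν z w)` in `z` and then applying Leibniz's rule in `w` gives the closed form
`H_{m,n}(z, w) = ∑_{k ≤ min m n} (-1)^k k! C(m,k) C(n,k) ν^(m+n-k) z^(m-k) w^(n-k)`. Hence
`u^m v^n H_{m,n}(z, w) / (m! n!)` is the sum of `a^i/i! · b^j/j! · c^k/k!` over `i + k = m`,
`j + k = n`, with `a = ν u z`, `b = ν v w`, `c = -ν u v` (and `w = conj z`), so the double series
is a regrouping of the absolutely convergent triple series of `exp a · exp b · exp c`.
-/

open Finset NormedSpace

theorem HasSum.sum_diag_shift {α : Type*} [AddCommMonoid α] [TopologicalSpace α]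
    [ContinuousAdd α] [RegularSpace α] {f : (ℕ × ℕ) × ℕ → α} {s : α} (hf : HasSum f s) :
    HasSum (fun p : ℕ × ℕ => ∑ k ∈ range (min p.1 p.2 + 1), f ((p.1 - k, p.2 - k), k)) s := by
  set shift : (ℕ × ℕ) × ℕ → (ℕ × ℕ) × ℕ := fun q => ((q.1.1 + q.2, q.1.2 + q.2), q.2)
  have h_inj : shift.Injective := by
    rintro ⟨⟨a, b⟩, k⟩ ⟨⟨a', b'⟩, k'⟩ h
    simp only [shift, Prod.mk.injEq] at h
    grind
  refine ((hasSum_extend_zero h_inj).mpr hf).prod_fiberwise fun p => ?_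
  have h_out : ∀ k ∉ range (min p.1 p.2 + 1), Function.extend shift f 0 (p, k) = 0 := by
    refine fun k hk => Function.extend_apply' _ _ _ ?_
    rintro ⟨⟨⟨a, b⟩, k'⟩, h⟩
    simp only [shift, Prod.ext_iff] at h
    simp only [mem_range] at hk
    omega
  convert hasSum_sum_of_ne_finset_zero (L := SummationFilter.unconditional ℕ) h_out using 1
  refine sum_congr rfl fun k hk => ?_
  have h_shift : shift ((p.1 - k, p.2 - k), k) = (p, k) := by
    simp only [mem_range] at hk
    ext <;> simp only [shift] <;> omega
  rw [← h_shift, h_inj.extend_apply]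

theorem hasSum_pow_div_factorial_mul_mul {𝔸 : Type*} [NormedDivisionRing 𝔸] [NormedAlgebra ℚ 𝔸]
    [CompleteSpace 𝔸] (a b c : 𝔸) :
    HasSum (fun q : (ℕ × ℕ) × ℕ =>
        a ^ q.1.1 / q.1.1.factorial * (b ^ q.1.2 / q.1.2.factorial) * (c ^ q.2 / q.2.factorial))
      (exp a * exp b * exp c) := by
  have ha := norm_expSeries_div_summable a
  have hb := norm_expSeries_div_summable b
  have hab := summable_mul_of_summable_norm ha hb
  have habc := summable_mul_of_summable_norm (ha.mul_norm hb) (norm_expSeries_div_summable c)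
  -- elaborating this product directly against the goal times out in higher-order unification
  have h_prod := ((expSeries_div_hasSum_exp a).mul (expSeries_div_hasSum_exp b) hab).mul
    (expSeries_div_hasSum_exp c) habc
  exact h_prod

theorem iteratedDeriv_pow_mul_cexp (m n : ℕ) (c x : ℂ) :
    iteratedDeriv m (fun w => w ^ n * Complex.exp (c * w)) x =
      ∑ k ∈ range (m + 1), m.choose k * n.descFactorial k * c ^ (m - k) *
        x ^ (n - k) * Complex.exp (c * x) := by
  rw [iteratedDeriv_fun_mul (by fun_prop) (by fun_prop)]
  refine sum_congr rfl fun k _ => ?_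
  simp only [iteratedDeriv_pow, iteratedDeriv_cexp_const_mul]
  ring

theorem complexHermite_eq_sum (ν : ℝ) (m n : ℕ) (z w : ℂ) :
    complexHermite ν m n z w =
      ∑ k ∈ range (min m n + 1), (-1) ^ k * k.factorial * m.choose k * n.choose k *
        (ν : ℂ) ^ (m + n - k) * z ^ (m - k) * w ^ (n - k) := by
  have h_inner : (fun w' => iteratedDeriv n (fun z' => Complex.exp (-(ν : ℂ) * z' * w')) z) =
      fun w' => (-ν : ℂ) ^ n * (w' ^ n * Complex.exp (-ν * z * w')) := by
    funext w'
    simp only [mul_right_comm _ _ w', iteratedDeriv_cexp_const_mul]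
    ring
  have h_vanish : ∀ k ∈ range (m + 1), k ∉ range (min m n + 1) →
      (m.choose k * n.descFactorial k * (-ν * z : ℂ) ^ (m - k) * w ^ (n - k) *
        Complex.exp (-ν * z * w) : ℂ) = 0 := by
    intro k hkm hk
    simp only [mem_range] at hkm hk
    rw [Nat.descFactorial_eq_zero_iff_lt.mpr (by omega)]
    simp
  rw [complexHermite, h_inner, iteratedDeriv_const_mul_field, iteratedDeriv_pow_mul_cexp,
    ← sum_subset (range_subset_range.mpr (by omega)) h_vanish, mul_sum, mul_sum]
  refine sum_congr rfl fun k hk => ?_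
  simp only [mem_range] at hk
  obtain ⟨i, rfl⟩ := Nat.exists_eq_add_of_le (show k ≤ m by omega)
  obtain ⟨j, rfl⟩ := Nat.exists_eq_add_of_le (show k ≤ n by omega)
  have h_exp : Complex.exp (ν * z * w) * Complex.exp (-ν * z * w) = 1 := by
    rw [← Complex.exp_add, neg_mul, neg_mul, add_neg_cancel, Complex.exp_zero]
  have h_sign : (-1 : ℂ) ^ (k + i + (k + j)) * (-1) ^ (k + j) * (-1) ^ i = (-1) ^ k := by
    rw [← pow_add, ← pow_add, show k + i + (k + j) + (k + j) + i = k + 2 * (k + i + j) by ring,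
      pow_add, pow_mul, neg_one_sq, one_pow, mul_one]
  rw [Nat.descFactorial_eq_factorial_mul_choose, Nat.cast_mul, mul_pow, neg_pow (ν : ℂ),
    neg_pow (ν : ℂ), show k + i + (k + j) - k = k + i + j by omega, Nat.add_sub_cancel_left,
    Nat.add_sub_cancel_left]
  linear_combination (Complex.exp (ν * z * w) * Complex.exp (-ν * z * w) * h_sign +
    (-1) ^ k * h_exp) * k.factorial * (k + i).choose k * (k + j).choose k *
      (ν : ℂ) ^ (k + i + j) * z ^ i * w ^ j

theorem pow_mul_pow_div_factorial_mul_complexHermite (ν : ℝ) (u v z w : ℂ) (m n : ℕ) :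
    u ^ m * v ^ n / (m.factorial * n.factorial) * complexHermite ν m n z w =
      ∑ k ∈ range (min m n + 1), (ν * u * z) ^ (m - k) / (m - k).factorial *
        ((ν * v * w) ^ (n - k) / (n - k).factorial) * ((-(ν * u * v)) ^ k / k.factorial) := by
  rw [complexHermite_eq_sum, mul_sum]
  refine sum_congr rfl fun k hk => ?_
  simp only [mem_range] at hk
  have hkm : k ≤ m := by omega
  have hkn : k ≤ n := by omega
  have hm := Nat.choose_mul_factorial_mul_factorial hkm
  have hn := Nat.choose_mul_factorial_mul_factorial hkn
  have hcm : (m.choose k : ℂ) ≠ 0 := Nat.cast_ne_zero.mpr (Nat.choose_pos hkm).ne'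
  have hcn : (n.choose k : ℂ) ≠ 0 := Nat.cast_ne_zero.mpr (Nat.choose_pos hkn).ne'
  obtain ⟨i, rfl⟩ := Nat.exists_eq_add_of_le hkm
  obtain ⟨j, rfl⟩ := Nat.exists_eq_add_of_le hkn
  simp only [Nat.add_sub_cancel_left] at hm hn ⊢
  rw [show k + i + (k + j) - k = k + i + j by omega, ← hm, ← hn]
  push_cast
  field_simp
  ring

theorem complexHermite_exponential_generating_function_general (ν : ℝ) (u v z : ℂ) :
    HasSum (fun p : ℕ × ℕ =>
        u^p.1 * v^p.2 / ((p.1.factorial : ℂ) * (p.2.factorial : ℂ))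
          * complexHermite ν p.1 p.2 z (starRingEnd ℂ z))
      (Complex.exp ((ν : ℂ) * (u * z + v * (starRingEnd ℂ z) - u * v))) := by
  set w := starRingEnd ℂ z
  have h_exp : Complex.exp (ν * (u * z + v * w - u * v)) =
      exp (ν * u * z) * exp (ν * v * w) * exp (-(ν * u * v)) := by
    simp only [← Complex.exp_eq_exp_ℂ, ← Complex.exp_add]
    ring_nf
  rw [h_exp]
  exact (hasSum_pow_div_factorial_mul_mul _ _ _).sum_diag_shift.congr_fun fun p =>
    pow_mul_pow_div_factorial_mul_complexHermite ν u v z w p.1 p.2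

theorem complexHermite_exponential_generating_function (ν : ℝ) (hν : 0 < ν) (u v z : ℂ) :
    HasSum (fun p : ℕ × ℕ =>
        u^p.1 * v^p.2 / ((p.1.factorial : ℂ) * (p.2.factorial : ℂ))
          * complexHermite ν p.1 p.2 z (starRingEnd ℂ z))
      (Complex.exp ((ν : ℂ) * (u * z + v * (starRingEnd ℂ z) - u * v))) :=
  complexHermite_exponential_generating_function_general ν u v z
end

section
/- The univariate complex Hermite polynomials satisfy the single-index generating function ∑_{k=0}^∞ (u^k/k!) H_{k,n}^ν(z, z̄) = ν^n (z̄ - u)^n exp(ν u z) for every natural n, complex u, z, and ν > 0. -/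
/-!
Differentiating `n` times in `z` turns the kernel `exp (-ν z w)` into
`g w := (-ν w)^n exp (-ν z w)`, so the series is `(-1)^n exp (ν z w)` times the Taylor series
of the entire function `g` at `w`, evaluated at `w - u`; it therefore converges everywhere,
to `(-1)^n exp (ν z w) g (w - u) = ν^n (w - u)^n exp (ν u z)`.
-/

open Complex Nat

theorem Complex.hasSum_taylorSeries_sub_of_entire {E : Type*} [NormedAddCommGroup E]
    [NormedSpace ℂ E] [CompleteSpace E] {f : ℂ → E} (hf : Differentiable ℂ f) (c u : ℂ) :
    HasSum (fun k : ℕ => ((-u) ^ k / k !) • iteratedDeriv k f c) (f (c - u)) := by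
  convert hasSum_taylorSeries_of_entire hf c (c - u) using 2 with k
  rw [smul_smul, sub_sub_cancel_left, div_eq_inv_mul]

theorem iteratedDeriv_cexp_mul_mul (n : ℕ) (a b z : ℂ) :
    iteratedDeriv n (fun z' => cexp (a * z' * b)) z = (a * b) ^ n * cexp (a * z * b) := by
  simp_rw [mul_right_comm a _ b]
  rw [iteratedDeriv_cexp_const_mul]

theorem complexHermite_eq_iteratedDeriv (ν : ℝ) (m n : ℕ) (z w : ℂ) :
    complexHermite ν m n z w = (-1) ^ (m + n) * cexp (ν * z * w) *
      iteratedDeriv m (fun w' => (-ν * w') ^ n * cexp (-ν * z * w')) w := by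
  simp only [complexHermite, iteratedDeriv_cexp_mul_mul]

theorem complexHermite_hasSum (ν : ℝ) (n : ℕ) (u z w : ℂ) :
    HasSum (fun k : ℕ => u ^ k / (k ! : ℂ) * complexHermite ν k n z w)
      ((ν : ℂ) ^ n * (w - u) ^ n * cexp (ν * u * z)) := by
  set g : ℂ → ℂ := fun w' => (-ν * w') ^ n * cexp (-ν * z * w')
  have hg : Differentiable ℂ g := by fun_prop
  have hsum := (hasSum_taylorSeries_sub_of_entire hg w u).mul_left ((-1) ^ n * cexp (ν * z * w))
  have hterm (k : ℕ) : (-1) ^ n * cexp (ν * z * w) * (((-u) ^ k / k !) • iteratedDeriv k g w) =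
      u ^ k / (k ! : ℂ) * complexHermite ν k n z w := by
    simp only [complexHermite_eq_iteratedDeriv, smul_eq_mul, neg_pow u, pow_add, g]
    ring
  have hval : (-1) ^ n * cexp (ν * z * w) * g (w - u) =
      (ν : ℂ) ^ n * (w - u) ^ n * cexp (ν * u * z) := by
    have hsq : ((-1 : ℂ) ^ n) ^ 2 = 1 := by rw [← pow_mul, mul_comm, pow_mul]; norm_num
    have hexp : cexp (ν * u * z) = cexp (ν * z * w) * cexp (-ν * z * (w - u)) := by
      rw [← Complex.exp_add]; ring_nf
    simp only [g, hexp, mul_pow, neg_pow (ν : ℂ)]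
    linear_combination ((ν : ℂ) ^ n * (w - u) ^ n * cexp (ν * z * w) *
      cexp (-ν * z * (w - u))) * hsq
  simpa only [hterm, hval] using hsum

theorem complexHermite_single_generating_function_general (ν : ℝ) (n : ℕ) (u z : ℂ) :
    HasSum (fun k : ℕ => u^k / (k.factorial : ℂ) * complexHermite ν k n z (starRingEnd ℂ z))
      ((ν : ℂ)^n * ((starRingEnd ℂ z) - u)^n * Complex.exp ((ν : ℂ) * u * z)) :=
  complexHermite_hasSum ν n u z (starRingEnd ℂ z)

theorem complexHermite_single_generating_function (ν : ℝ) (hν : 0 < ν) (n : ℕ) (u z : ℂ) :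
    HasSum (fun k : ℕ => u^k / (k.factorial : ℂ) * complexHermite ν k n z (starRingEnd ℂ z))
      ((ν : ℂ)^n * ((starRingEnd ℂ z) - u)^n * Complex.exp ((ν : ℂ) * u * z)) :=
  complexHermite_single_generating_function_general ν n u z
end

section
/- The univariate complex Hermite polynomials satisfy the variant Rodrigues formula H_{m,n}^ν(z, z̄) = (-1)^m ν^n e^{ν z z̄} ∂_{z̄}^m ( z̄^n e^{-ν z z̄} ) for all natural m, n, complex z, and ν > 0. -/
open Complex

theorem iteratedDeriv_cexp_mul_mul_const (n : ℕ) (a w z : ℂ) :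
    iteratedDeriv n (fun z' => exp (a * z' * w)) z = (a * w) ^ n * exp (a * z * w) := by
  simpa only [mul_right_comm a] using congrFun (iteratedDeriv_cexp_const_mul n (a * w)) z

theorem complexHermite_variant_rodrigues_general (ν : ℝ) (m n : ℕ) (z : ℂ) :
    complexHermite ν m n z (starRingEnd ℂ z)
      = (-1)^m * (ν : ℂ)^n * Complex.exp ((ν : ℂ) * z * (starRingEnd ℂ z))
        * iteratedDeriv m (fun w => w^n * Complex.exp (-(ν : ℂ) * z * w))
            (starRingEnd ℂ z) := by
  have iteratedDeriv_z : (fun w => iteratedDeriv n (fun z' => exp (-(ν : ℂ) * z' * w)) z)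
      = fun w => (-(ν : ℂ)) ^ n * (w ^ n * exp (-(ν : ℂ) * z * w)) := by
    funext w
    rw [iteratedDeriv_cexp_mul_mul_const, mul_pow, mul_assoc]
  have sign : ((-1 : ℂ) ^ (m + n)) * (-(ν : ℂ)) ^ n = (-1) ^ m * (ν : ℂ) ^ n := by
    rw [neg_pow (ν : ℂ), ← mul_assoc, ← pow_add, add_assoc, pow_add, Even.neg_one_pow ⟨n, rfl⟩,
      mul_one]
  rw [complexHermite, iteratedDeriv_z, iteratedDeriv_const_mul_field, ← sign]
  ring

theorem complexHermite_variant_rodrigues (ν : ℝ) (hν : 0 < ν) (m n : ℕ) (z : ℂ) :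
    complexHermite ν m n z (starRingEnd ℂ z)
      = (-1)^m * (ν : ℂ)^n * Complex.exp ((ν : ℂ) * z * (starRingEnd ℂ z))
        * iteratedDeriv m (fun w => w^n * Complex.exp (-(ν : ℂ) * z * w))
            (starRingEnd ℂ z) :=
  complexHermite_variant_rodrigues_general ν m n z
end

section
/- (Mehler formula for complex Hermite polynomials) For ν > 0, naturals m, m', complex t with |t| = 1, and all z, w ∈ ℂ: ∑_{n=0}^∞ (tⁿ/(n! νⁿ)) H_{m,n}^ν(z, z̄) H_{n,m'}^ν(w, w̄) = (-t)^{m'} H_{m,m'}^ν(z - t w, z̄ - t̄ w̄) · exp(ν t w z̄). -/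
open Complex

theorem iteratedDeriv_id_mul {𝕜 : Type*} [NontriviallyNormedField 𝕜] {f : 𝕜 → 𝕜}
    (hf : ContDiff 𝕜 ⊤ f) (m : ℕ) (x : 𝕜) :
    iteratedDeriv m (fun y => y * f y) x =
      x * iteratedDeriv m f x + m * iteratedDeriv (m - 1) f x := by
  rw [iteratedDeriv_fun_mul (f := fun y => y) contDiffAt_fun_id (hf.of_le le_top).contDiffAt]
  rcases m with _ | m
  · simp
  · rw [add_comm (x * _)]
    simp [Finset.sum_range_succ', iteratedDeriv_fun_id]

theorem iteratedDeriv_pow_mul_cexp_succ (c : ℂ) (m n : ℕ) (x : ℂ) :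
    iteratedDeriv (m + 1) (fun y => y ^ (n + 1) * cexp (c * y)) x =
      (n + 1) * iteratedDeriv m (fun y => y ^ n * cexp (c * y)) x
        + c * iteratedDeriv m (fun y => y ^ (n + 1) * cexp (c * y)) x := by
  have hderiv : deriv (fun y => y ^ (n + 1) * cexp (c * y)) =
      fun y => (n + 1) * (y ^ n * cexp (c * y)) + c * (y ^ (n + 1) * cexp (c * y)) := by
    funext y
    have h : HasDerivAt (fun y => y ^ (n + 1) * cexp (c * y))
        ((n + 1 : ℕ) * y ^ n * cexp (c * y) + y ^ (n + 1) * (cexp (c * y) * c)) y :=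
      (hasDerivAt_pow (n + 1) y).mul ((hasDerivAt_const_mul c).cexp)
    rw [h.deriv]
    push_cast
    ring
  rw [iteratedDeriv_succ', hderiv, iteratedDeriv_fun_add (by fun_prop) (by fun_prop)]
  simp only [iteratedDeriv_const_mul_field]

theorem contDiff_pow_mul_cexp (c : ℂ) (n : ℕ) : ContDiff ℂ ⊤ (fun y => y ^ n * cexp (c * y)) := by
  fun_prop

namespace complexHermite

variable (ν : ℝ)

theorem eq_iteratedDeriv (m n : ℕ) (z w : ℂ) :
    complexHermite ν m n z w = (-1) ^ m * ν ^ n * cexp (ν * z * w) *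
      iteratedDeriv m (fun x => x ^ n * cexp (-(ν * z) * x)) w := by
  have hinner : (fun w' => iteratedDeriv n (fun z' => cexp (-ν * z' * w')) z) =
      fun w' => (-ν) ^ n * (w' ^ n * cexp (-(ν * z) * w')) := by
    funext w'
    simp_rw [show ∀ z', -(ν : ℂ) * z' * w' = -ν * w' * z' by intro; ring,
      iteratedDeriv_cexp_const_mul]
    ring_nf
  have hsign : (-1 : ℂ) ^ (m + n) * (-ν) ^ n = (-1) ^ m * ν ^ n := by
    rw [pow_add, mul_assoc, ← mul_pow]; simp
  rw [complexHermite, hinner, iteratedDeriv_const_mul_field, ← hsign]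
  ring

theorem zero_left (n : ℕ) (z w : ℂ) : complexHermite ν 0 n z w = ν ^ n * w ^ n := by
  rw [eq_iteratedDeriv, iteratedDeriv_zero, neg_mul, Complex.exp_neg]
  field_simp

theorem zero_right (m : ℕ) (z w : ℂ) : complexHermite ν m 0 z w = ν ^ m * z ^ m := by
  simp only [eq_iteratedDeriv, pow_zero, one_mul, iteratedDeriv_cexp_const_mul]
  rw [neg_mul, Complex.exp_neg]
  field_simp
  rw [← mul_pow]
  simp [mul_pow]

theorem succ_right (m n : ℕ) (z w : ℂ) :
    complexHermite ν m (n + 1) z w =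
      ν * w * complexHermite ν m n z w - m * ν * complexHermite ν (m - 1) n z w := by
  rcases m with _ | m
  · simp only [zero_left, CharP.cast_eq_zero, zero_mul, sub_zero]
    ring
  simp only [eq_iteratedDeriv, pow_succ', mul_assoc _ (_ ^ n),
    iteratedDeriv_id_mul (contDiff_pow_mul_cexp _ n), Nat.add_sub_cancel]
  push_cast
  ring

theorem succ_left (m n : ℕ) (z w : ℂ) :
    complexHermite ν (m + 1) n z w =
      ν * z * complexHermite ν m n z w - n * ν * complexHermite ν m (n - 1) z w := by
  rcases n with _ | n
  · simp only [zero_right, CharP.cast_eq_zero, zero_mul, sub_zero]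
    ring
  simp only [eq_iteratedDeriv, iteratedDeriv_pow_mul_cexp_succ, Nat.add_sub_cancel]
  push_cast
  ring

end complexHermite

theorem hasSum_natCast_mul_of_hasSum_succ {ν : ℝ} (hν : ν ≠ 0) (t : ℂ) {g : ℕ → ℂ} {a : ℂ}
    (h : HasSum (fun n : ℕ => t ^ n / (n.factorial * (ν : ℂ) ^ n) * g (n + 1)) a) :
    HasSum (fun n : ℕ => t ^ n / (n.factorial * (ν : ℂ) ^ n) * (n * ν * g n)) (t * a) := by
  have hν' : (ν : ℂ) ≠ 0 := by exact_mod_cast hν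
  rw [← hasSum_nat_add_iff' 1]
  simpa using (h.mul_left t).congr_fun fun n => by
    rw [Nat.factorial_succ]
    push_cast
    field_simp
    ring

section Mehler

variable {ν : ℝ} (hν : ν ≠ 0) {t : ℂ} (ht : t ≠ 0) (z u w v : ℂ)
include hν ht

theorem hasSum_complexHermite_mehler_zero_left (m' : ℕ) :
    HasSum (fun n : ℕ => t ^ n / (n.factorial * (ν : ℂ) ^ n)
        * complexHermite ν 0 n z u * complexHermite ν n m' w v)
      ((-t) ^ m' * complexHermite ν 0 m' (z - t * w) (u - t⁻¹ * v) * cexp (ν * t * w * u)) := by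
  induction m' with
  | zero =>
    simp only [complexHermite.zero_left, complexHermite.zero_right, pow_zero, mul_one, one_mul,
      Complex.exp_eq_exp_ℂ]
    refine (NormedSpace.expSeries_div_hasSum_exp ((ν : ℂ) * t * w * u)).congr_fun fun n => ?_
    field_simp
    ring
  | succ m' ih =>
    have hshift := hasSum_natCast_mul_of_hasSum_succ hν t
      (g := fun n => complexHermite ν 0 n z u * complexHermite ν (n - 1) m' w v)
      ((ih.mul_left (ν * u)).congr_fun fun n => by
        simp only [complexHermite.zero_left, Nat.add_sub_cancel]
        ring)
    have hval : (-t) ^ (m' + 1) * complexHermite ν 0 (m' + 1) (z - t * w) (u - t⁻¹ * v)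
        * cexp (ν * t * w * u) = ν * v * ((-t) ^ m' * complexHermite ν 0 m' (z - t * w)
          (u - t⁻¹ * v) * cexp (ν * t * w * u)) - t * (ν * u * ((-t) ^ m'
            * complexHermite ν 0 m' (z - t * w) (u - t⁻¹ * v) * cexp (ν * t * w * u))) := by
      have hflip : -t * (u - t⁻¹ * v) = v - t * u := by field_simp; ring
      simp only [complexHermite.zero_left, pow_succ]
      linear_combination ((-t) ^ m' * ν ^ m' * (u - t⁻¹ * v) ^ m' * cexp (ν * t * w * u) * ν)
        * hflip
    rw [hval]
    refine ((ih.mul_left (ν * v)).sub hshift).congr_fun fun n => ?_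
    simp only [complexHermite.succ_right ν n m' w v]
    ring

theorem hasSum_complexHermite_mehler (m m' : ℕ) :
    HasSum (fun n : ℕ => t ^ n / (n.factorial * (ν : ℂ) ^ n)
        * complexHermite ν m n z u * complexHermite ν n m' w v)
      ((-t) ^ m' * complexHermite ν m m' (z - t * w) (u - t⁻¹ * v) * cexp (ν * t * w * u)) := by
  induction m generalizing m' with
  | zero => exact hasSum_complexHermite_mehler_zero_left hν ht z u w v m'
  | succ m ih =>
    have hshift := hasSum_natCast_mul_of_hasSum_succ hν t
      (g := fun n => complexHermite ν m (n - 1) z u * complexHermite ν n m' w v)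
      ((((ih m').mul_left (ν * w)).sub ((ih (m' - 1)).mul_left ((m' : ℂ) * ν))).congr_fun
        fun n => by
          simp only [Nat.add_sub_cancel, complexHermite.succ_left ν n m' w v]
          ring)
    have hpow : (m' : ℂ) * (-t) ^ m' = -(m' * t * (-t) ^ (m' - 1)) := by
      rcases m' with _ | m'
      · simp
      · rw [Nat.add_sub_cancel, pow_succ]
        ring
    have hval : (-t) ^ m' * complexHermite ν (m + 1) m' (z - t * w) (u - t⁻¹ * v)
        * cexp (ν * t * w * u) = ν * z * ((-t) ^ m' * complexHermite ν m m' (z - t * w)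
          (u - t⁻¹ * v) * cexp (ν * t * w * u)) - t * (ν * w * ((-t) ^ m'
            * complexHermite ν m m' (z - t * w) (u - t⁻¹ * v) * cexp (ν * t * w * u))
          - m' * ν * ((-t) ^ (m' - 1) * complexHermite ν m (m' - 1) (z - t * w) (u - t⁻¹ * v)
            * cexp (ν * t * w * u))) := by
      rw [complexHermite.succ_left]
      linear_combination (-ν * complexHermite ν m (m' - 1) (z - t * w) (u - t⁻¹ * v)
        * cexp (ν * t * w * u)) * hpow
    rw [hval]
    refine (((ih m').mul_left (ν * z)).sub hshift).congr_fun fun n => ?_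
    simp only [complexHermite.succ_left ν m n z u]
    ring

end Mehler

theorem complexHermite_mehler (ν : ℝ) (hν : 0 < ν) (m m' : ℕ) (t : ℂ) (ht : ‖t‖ = 1)
    (z w : ℂ) :
    HasSum (fun n : ℕ => t^n / ((n.factorial : ℂ) * (ν : ℂ)^n)
        * complexHermite ν m n z (starRingEnd ℂ z)
        * complexHermite ν n m' w (starRingEnd ℂ w))
      ((-t)^m' * complexHermite ν m m' (z - t * w) (starRingEnd ℂ (z - t * w))
        * Complex.exp ((ν : ℂ) * t * w * (starRingEnd ℂ z))) := by
  have ht₀ : t ≠ 0 := norm_ne_zero_iff.mp (ht ▸ one_ne_zero)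
  rw [map_sub, map_mul, ← Complex.inv_eq_conj ht]
  exact hasSum_complexHermite_mehler hν.ne' ht₀ _ _ _ _ m m'
end

section
/- The diagonal complex Hermite polynomial is expressible via Laguerre polynomials: H_{m,m}^ν(ξ, ξ̄) = (-ν)^m m! L_m^{(0)}(ν |ξ|²) for all natural m, complex ξ, and ν > 0. -/
noncomputable def laguerre (m : ℕ) (x : ℂ) : ℂ :=
  ∑ k ∈ Finset.range (m+1), (m.choose k : ℂ) * (-x)^k / (k.factorial : ℂ)

/-!
Differentiating `exp (-ν z w)` `m` times in `z` gives `(-ν w)^m exp (-ν z w)`. The Leibniz rule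
then differentiates `w^m exp (-ν z w)` `m` times in `w`; after the exponentials cancel, what is left
is `m!` times the Laguerre polynomial at `ν z w`, summed in reverse order. This holds for independent
`z` and `w`, and `w = conj ξ` gives `ν z w = ν |ξ|²`.
-/

open Finset Complex

theorem iteratedDeriv_pow_mul_cexp_const_mul (n m : ℕ) (a w : ℂ) :
    iteratedDeriv m (fun w => w ^ n * exp (a * w)) w
      = (∑ k ∈ range (m + 1), (m.choose k * n.descFactorial k * a ^ (m - k) * w ^ (n - k) : ℂ))
          * exp (a * w) := by
  rw [iteratedDeriv_fun_mul (by fun_prop) (by fun_prop), sum_mul]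
  refine sum_congr rfl fun k _ => ?_
  simp only [iteratedDeriv_pow, iteratedDeriv_cexp_const_mul]
  ring

theorem iteratedDeriv_cexp_const_mul_mul (n : ℕ) (c w z : ℂ) :
    iteratedDeriv n (fun z => exp (c * z * w)) z = (c * w) ^ n * exp (c * z * w) := by
  simp only [mul_right_comm c _ w, iteratedDeriv_cexp_const_mul]

theorem factorial_mul_laguerre (m : ℕ) (x : ℂ) :
    m.factorial * laguerre m x
      = ∑ k ∈ range (m + 1), (m.choose k * m.descFactorial k * (-x) ^ (m - k) : ℂ) := by
  rw [laguerre, mul_sum, ← sum_range_reflect]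
  refine sum_congr rfl fun k hk => ?_
  have hkm : k ≤ m := Nat.lt_succ_iff.mp (mem_range.mp hk)
  have hfact : ((m - k).factorial * m.descFactorial k : ℂ) = m.factorial := by
    exact_mod_cast Nat.factorial_mul_descFactorial hkm
  rw [Nat.add_sub_cancel, Nat.choose_symm hkm, ← hfact]
  field_simp [Nat.cast_ne_zero.mpr (m - k).factorial_ne_zero]

theorem complexHermite_diagonal (ν : ℝ) (m : ℕ) (z w : ℂ) :
    complexHermite ν m m z w = (-(ν : ℂ)) ^ m * m.factorial * laguerre m (ν * z * w) := by
  have hinner : (fun w' => iteratedDeriv m (fun z' => exp (-(ν : ℂ) * z' * w')) z)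
      = fun w' => (-(ν : ℂ)) ^ m * (w' ^ m * exp (-(ν * z) * w')) := by
    funext w'
    rw [iteratedDeriv_cexp_const_mul_mul, mul_pow, neg_mul, mul_assoc]
  have hexp : exp (ν * z * w) * exp (-(ν * z) * w) = 1 := by
    rw [← exp_add, neg_mul, add_neg_cancel, exp_zero]
  have hsum : ∑ k ∈ range (m + 1),
      (m.choose k * m.descFactorial k * (-(ν * z)) ^ (m - k) * w ^ (m - k) : ℂ)
        = m.factorial * laguerre m (ν * z * w) := by
    rw [factorial_mul_laguerre]
    refine sum_congr rfl fun k _ => ?_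
    rw [mul_assoc _ (_ ^ _), ← mul_pow, neg_mul]
  have hsign : (-1 : ℂ) ^ (m + m) = 1 := by
    rw [← two_mul, pow_mul, neg_one_sq, one_pow]
  rw [complexHermite, hinner, iteratedDeriv_const_mul_field,
    iteratedDeriv_pow_mul_cexp_const_mul, hsum, hsign]
  linear_combination ((-(ν : ℂ)) ^ m * m.factorial * laguerre m (ν * z * w)) * hexp

theorem complexHermite_diagonal_laguerre_general (ν : ℝ) (m : ℕ) (ξ : ℂ) :
    complexHermite ν m m ξ (starRingEnd ℂ ξ)
      = (-(ν : ℂ))^m * (m.factorial : ℂ) * laguerre m ((ν : ℂ) * Complex.normSq ξ) := by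
  rw [complexHermite_diagonal, mul_assoc (ν : ℂ), mul_conj]

theorem complexHermite_diagonal_laguerre (ν : ℝ) (hν : 0 < ν) (m : ℕ) (ξ : ℂ) :
    complexHermite ν m m ξ (starRingEnd ℂ ξ)
      = (-(ν : ℂ))^m * (m.factorial : ℂ) * laguerre m ((ν : ℂ) * Complex.normSq ξ) :=
  complexHermite_diagonal_laguerre_general ν m ξ
end
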